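/- arXiv:math/0510223 — 2 statements merged into one kernel-verified Lean document; each statement's English description precedes it below -/
import Mathlib

section
/- Let G be a finite p-group, d ≥ 0, and e ≥ 1 such that G^{(d+1)} ≤ γ_{2^{d+1}+1}(G) and G^{(d+e+1)} ≠ 1. Then |G^{(d+e)}/G^{(d+e+1)}| > p^{2^{d+e}+1}; that is, the derived quotient G^{(d+e)}/G^{(d+e+1)} is not small. -/
/-!
Hall's bound: if `H ≤ γ_{c+1}(G)` is a nonabelian normal subgroup of a finite `p`-group `G`,
then `|H : H'| ≥ p^(c+2)`. Put `H_k = [H, G, …, G]` (`k` copies of `G`). By nilpotency the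
`H_k` strictly decrease until they reach `1`, so `|H : H_k| ≥ p^k` while `H_k ≠ 1`; and the
three subgroups lemma gives `[N, γ_{c+1}] ≤ N_{c+1}` for every normal `N`. Hence
`H' ≤ [H, γ_{c+1}] ≤ H_{c+1}`. If `H/H_1` is cyclic, `H_1` is central modulo `[H, H_1]`, so
`H' ≤ [H_1, γ_{c+1}] ≤ H_{c+2}`; otherwise `|H : H_1| ≥ p²` and `|H_1 : H'| ≥ p^c`.

The case `N = γ_{i+1}` of the three subgroups bound is `[γ_{i+1}, γ_{j+1}] ≤ γ_{i+j+2}`, which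
makes `G^(n) ≤ γ_{a+1}` propagate to `G^(n+k) ≤ γ_{2^k a+1}`; with `n = d + 1`, `a = 2^(d+1)`
this puts `H = G^(d+e)` inside `γ_{2^(d+e)+1}`, and Hall's bound gives
`|H : H'| ≥ p^(2^(d+e)+2)`.
-/

open Subgroup

namespace Subgroup

variable {G : Type*} [Group G]

def commutatorTopSeries (N : Subgroup G) : ℕ → Subgroup G
  | 0 => N
  | k + 1 => ⁅commutatorTopSeries N k, ⊤⁆

variable (N : Subgroup G)

lemma commutatorTopSeries_succ (k : ℕ) :
    N.commutatorTopSeries (k + 1) = ⁅N.commutatorTopSeries k, ⊤⁆ := rfl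

instance commutatorTopSeries_normal [N.Normal] (k : ℕ) : (N.commutatorTopSeries k).Normal := by
  induction k with
  | zero => assumption
  | succ k _ => rw [commutatorTopSeries_succ]; infer_instance

lemma commutatorTopSeries_antitone [N.Normal] : Antitone N.commutatorTopSeries :=
  antitone_nat_of_succ_le fun _ => commutator_le_left _ _

lemma commutatorTopSeries_add (a b : ℕ) :
    N.commutatorTopSeries (a + b) = (N.commutatorTopSeries a).commutatorTopSeries b := by
  induction b with
  | zero => rfl
  | succ b ih => rw [← Nat.add_assoc, commutatorTopSeries_succ, commutatorTopSeries_succ, ih]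

lemma commutatorTopSeries_le_lowerCentralSeries {N : Subgroup G} {c : ℕ}
    (h : N ≤ lowerCentralSeries ⊤ c) (k : ℕ) :
    N.commutatorTopSeries k ≤ lowerCentralSeries ⊤ (c + k) := by
  induction k with
  | zero => exact h
  | succ k ih => exact commutator_mono ih le_rfl

lemma commutator_commutator_le_of_rotate {A B C K : Subgroup G} [K.Normal]
    (h1 : ⁅⁅B, C⁆, A⁆ ≤ K) (h2 : ⁅⁅C, A⁆, B⁆ ≤ K) : ⁅⁅A, B⁆, C⁆ ≤ K := by
  simp only [← QuotientGroup.ker_mk' K, ← map_eq_bot_iff, map_commutator] at h1 h2 ⊢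
  exact commutator_commutator_eq_bot_of_rotate h1 h2

lemma commutator_lowerCentralSeries_le_commutatorTopSeries [N.Normal] (c : ℕ) :
    ⁅N, lowerCentralSeries ⊤ c⁆ ≤ N.commutatorTopSeries (c + 1) := by
  induction c generalizing N with
  | zero => exact le_rfl
  | succ c ih =>
    rw [lowerCentralSeries_succ, commutator_comm]
    refine commutator_commutator_le_of_rotate ?_ (commutator_mono (ih N) le_rfl)
    rw [commutator_comm ⊤ N]
    refine (ih (N.commutatorTopSeries 1)).trans_eq ?_
    rw [← commutatorTopSeries_add, add_comm 1]

lemma commutator_lowerCentralSeries_le (a b : ℕ) :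
    ⁅(⊤ : Subgroup G).lowerCentralSeries a, (⊤ : Subgroup G).lowerCentralSeries b⁆ ≤
      (⊤ : Subgroup G).lowerCentralSeries (a + b + 1) :=
  (commutator_lowerCentralSeries_le_commutatorTopSeries _ b).trans
    (commutatorTopSeries_le_lowerCentralSeries le_rfl _)

lemma eq_bot_of_commutator_top_eq_self [Group.IsNilpotent G] {N : Subgroup G}
    (h : ⁅N, ⊤⁆ = N) : N = ⊥ := by
  obtain ⟨n, hn⟩ := nilpotent_iff_lowerCentralSeries.mp ‹_›
  have hle : ∀ m, N ≤ lowerCentralSeries ⊤ m := fun m => by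
    induction m with
    | zero => exact le_top
    | succ m ih => exact h.ge.trans (commutator_mono ih le_rfl)
  exact le_bot_iff.mp (hn ▸ hle n)

lemma commutator_top_lt_self [Group.IsNilpotent G] [N.Normal] (hN : N ≠ ⊥) : ⁅N, ⊤⁆ < N :=
  (commutator_le_left N ⊤).lt_of_ne fun h => hN (eq_bot_of_commutator_top_eq_self h)

lemma commutator_eq_bot_of_le_zpowers_sup {K A : Subgroup G} {x : G} (hx : x ∈ K)
    (hK : K ≤ zpowers x ⊔ A) (hA : A ≤ centralizer K) : ⁅K, K⁆ = ⊥ := by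
  have hxK : zpowers x ≤ centralizer K := by
    rw [le_centralizer_iff]
    refine hK.trans (sup_le ?_ ?_)
    · exact le_centralizer_iff_isMulCommutative.mpr inferInstance
    · exact hA.trans (centralizer_le (zpowers_le.mpr hx))
  rw [commutator_eq_bot_iff_le_centralizer]
  exact hK.trans (sup_le hxK hA)

lemma exists_le_zpowers_sup_of_isCyclic {A H : Subgroup G} [(A.subgroupOf H).Normal]
    [IsCyclic (H ⧸ A.subgroupOf H)] : ∃ x ∈ H, H ≤ zpowers x ⊔ A := by
  obtain ⟨g, hg⟩ := IsCyclic.exists_generator (α := H ⧸ A.subgroupOf H)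
  obtain ⟨x, rfl⟩ := QuotientGroup.mk_surjective g
  refine ⟨x, x.2, fun h hh => ?_⟩
  obtain ⟨k, hk⟩ := mem_zpowers_iff.mp (hg (⟨h, hh⟩ : H))
  rw [← QuotientGroup.mk_zpow, QuotientGroup.eq, mem_subgroupOf] at hk
  have hh : h = (x : G) ^ k * (((x ^ k)⁻¹ * ⟨h, hh⟩ : H) : G) := by simp
  rw [hh]
  exact mul_mem (mem_sup_left (zpow_mem_zpowers _ _)) (mem_sup_right hk)

lemma commutator_le_commutator_of_le_zpowers_sup {H A : Subgroup G} [H.Normal] [A.Normal]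
    {x : G} (hx : x ∈ H) (hH : H ≤ zpowers x ⊔ A) : ⁅H, H⁆ ≤ ⁅H, A⁆ := by
  set π := QuotientGroup.mk' ⁅H, A⁆
  rw [← QuotientGroup.ker_mk' ⁅H, A⁆, ← map_eq_bot_iff, map_commutator]
  refine commutator_eq_bot_of_le_zpowers_sup (A := A.map π) (mem_map_of_mem π hx) ?_ ?_
  · simpa only [map_sup, MonoidHom.map_zpowers] using map_mono (f := π) hH
  · rw [← commutator_eq_bot_iff_le_centralizer, ← map_commutator, map_eq_bot_iff,
      QuotientGroup.ker_mk', commutator_comm]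

end Subgroup

lemma derivedSeries_add_le_lowerCentralSeries {G : Type*} [Group G] {n a : ℕ}
    (h : derivedSeries G n ≤ (⊤ : Subgroup G).lowerCentralSeries a) (k : ℕ) :
    derivedSeries G (n + k) ≤ (⊤ : Subgroup G).lowerCentralSeries (2 ^ k * a) := by
  induction k with
  | zero => simpa using h
  | succ k ih =>
    calc derivedSeries G (n + k + 1)
        ≤ ⁅(⊤ : Subgroup G).lowerCentralSeries (2 ^ k * a),
            (⊤ : Subgroup G).lowerCentralSeries (2 ^ k * a)⁆ := commutator_mono ih ih
      _ ≤ (⊤ : Subgroup G).lowerCentralSeries (2 ^ k * a + 2 ^ k * a + 1) :=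
          commutator_lowerCentralSeries_le _ _
      _ ≤ (⊤ : Subgroup G).lowerCentralSeries (2 ^ (k + 1) * a) :=
          Subgroup.lowerCentralSeries_antitone _
            (by rw [pow_succ, mul_comm _ 2, mul_assoc]; omega)

namespace IsPGroup

variable {p : ℕ} [Fact p.Prime]

lemma sq_le_card_of_not_isCyclic {Q : Type*} [Group Q] [Finite Q] (hQ : IsPGroup p Q)
    (hcyc : ¬IsCyclic Q) : p ^ 2 ≤ Nat.card Q := by
  obtain ⟨n, hn⟩ := IsPGroup.iff_card.mp hQ
  rw [hn]
  refine Nat.pow_le_pow_right (Fact.out : p.Prime).pos (not_lt.mp fun hn2 => hcyc ?_)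
  interval_cases n
  · rw [pow_zero, Nat.card_eq_one_iff_unique] at hn
    have := hn.1
    exact isCyclic_of_subsingleton
  · rw [pow_one] at hn
    exact isCyclic_of_prime_card hn

variable {G : Type*} [Group G] [Finite G]

lemma prime_le_relIndex_of_lt (hG : IsPGroup p G) {A B : Subgroup G} (h : A < B) :
    p ≤ A.relIndex B := by
  obtain ⟨n, hn⟩ := (hG.to_subgroup B).index (A.subgroupOf B)
  rw [relIndex, hn]
  refine Nat.le_self_pow (fun hn0 => h.not_ge ?_) p
  rwa [hn0, pow_zero, index_eq_one, subgroupOf_eq_top] at hn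

lemma pow_le_relIndex_commutatorTopSeries (hG : IsPGroup p G) {N : Subgroup G} [N.Normal]
    {k : ℕ} (hk : N.commutatorTopSeries k ≠ ⊥) :
    p ^ k ≤ (N.commutatorTopSeries k).relIndex N := by
  have := hG.isNilpotent
  induction k with
  | zero => exact (relIndex_self N).ge
  | succ k ih =>
    have hk' : N.commutatorTopSeries k ≠ ⊥ :=
      ne_bot_of_le_ne_bot hk (N.commutatorTopSeries_antitone k.le_succ)
    calc p ^ (k + 1)
        ≤ (N.commutatorTopSeries k).relIndex N *
            (N.commutatorTopSeries (k + 1)).relIndex (N.commutatorTopSeries k) :=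
          Nat.mul_le_mul (ih hk') (hG.prime_le_relIndex_of_lt (commutator_top_lt_self _ hk'))
      _ = (N.commutatorTopSeries (k + 1)).relIndex N := by
          rw [mul_comm]
          exact relIndex_mul_relIndex _ _ _ (N.commutatorTopSeries_antitone k.le_succ)
            (N.commutatorTopSeries_antitone k.zero_le)

theorem pow_le_relIndex_commutator (hG : IsPGroup p G) {H : Subgroup G} [H.Normal] {c : ℕ}
    (hH : H ≤ (⊤ : Subgroup G).lowerCentralSeries c) (hne : ⁅H, H⁆ ≠ ⊥) :
    p ^ (c + 2) ≤ ⁅H, H⁆.relIndex H := by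
  set H₁ := H.commutatorTopSeries 1
  have hcomm_le (N : Subgroup G) [N.Normal] : ⁅N, H⁆ ≤ N.commutatorTopSeries (c + 1) :=
    (commutator_mono le_rfl hH).trans (N.commutator_lowerCentralSeries_le_commutatorTopSeries c)
  have hrel {K : Subgroup G} (hK : ⁅H, H⁆ ≤ K) : K.relIndex H ≤ ⁅H, H⁆.relIndex H :=
    relIndex_le_of_le_left hK index_ne_zero_of_finite
  by_cases hcyc : IsCyclic (H ⧸ H₁.subgroupOf H)
  · obtain ⟨x, hx, hHx⟩ := exists_le_zpowers_sup_of_isCyclic (A := H₁) (H := H)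
    have hD : ⁅H, H⁆ ≤ H.commutatorTopSeries (c + 2) :=
      calc ⁅H, H⁆ ≤ ⁅H, H₁⁆ := commutator_le_commutator_of_le_zpowers_sup hx hHx
        _ = ⁅H₁, H⁆ := commutator_comm _ _
        _ ≤ H₁.commutatorTopSeries (c + 1) := hcomm_le H₁
        _ = H.commutatorTopSeries (c + 2) := by rw [← commutatorTopSeries_add, add_comm]
    exact (hG.pow_le_relIndex_commutatorTopSeries (ne_bot_of_le_ne_bot hne hD)).trans (hrel hD)
  · have hD : ⁅H, H⁆ ≤ H₁.commutatorTopSeries c := by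
      rw [← commutatorTopSeries_add, add_comm]
      exact hcomm_le H
    calc p ^ (c + 2) = p ^ c * p ^ 2 := pow_add _ _ _
      _ ≤ (H₁.commutatorTopSeries c).relIndex H₁ * H₁.relIndex H :=
          Nat.mul_le_mul (hG.pow_le_relIndex_commutatorTopSeries (ne_bot_of_le_ne_bot hne hD))
            (((hG.to_subgroup H).to_quotient _).sq_le_card_of_not_isCyclic hcyc)
      _ = (H₁.commutatorTopSeries c).relIndex H :=
          relIndex_mul_relIndex _ _ _ (H₁.commutatorTopSeries_antitone c.zero_le)
            (commutator_le_left H ⊤)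
      _ ≤ ⁅H, H⁆.relIndex H := hrel hD

end IsPGroup

/-- If `G^(d+1) ≤ γ_{2^(d+1)+1}(G)` in a finite `p`-group `G`, and `e ≥ 1` with
`G^(d+e+1) ≠ 1`, then `|G^(d+e)/G^(d+e+1)| > p^(2^(d+e)+1)`, i.e. the derived quotient
`G^(d+e)/G^(d+e+1)` is not small. (Here `γ_i(G) = lowerCentralSeries G (i-1)`.) -/
theorem derived_quotient_not_small_of_le {p : ℕ} (hp : p.Prime) {G : Type*}
    [Group G] [Finite G] (hG : IsPGroup p G) (d e : ℕ) (he : 1 ≤ e)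
    (h : derivedSeries G (d + 1) ≤ (⊤ : Subgroup G).lowerCentralSeries (2 ^ (d + 1)))
    (hne : derivedSeries G (d + e + 1) ≠ ⊥) :
    p ^ (2 ^ (d + e) + 1) <
      (derivedSeries G (d + e + 1)).relIndex (derivedSeries G (d + e)) := by
  have := Fact.mk hp
  obtain ⟨k, rfl⟩ : ∃ k, e = k + 1 := ⟨e - 1, by omega⟩
  have hle : derivedSeries G (d + (k + 1)) ≤
      (⊤ : Subgroup G).lowerCentralSeries (2 ^ (d + (k + 1))) := by
    simpa only [← pow_add, add_comm k, add_assoc] using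
      derivedSeries_add_le_lowerCentralSeries h k
  calc p ^ (2 ^ (d + (k + 1)) + 1) < p ^ (2 ^ (d + (k + 1)) + 2) :=
        Nat.pow_lt_pow_right hp.one_lt (by omega)
    _ ≤ _ := hG.pow_le_relIndex_commutator hle hne
end

section
/- A finite p-group G has at most two small derived quotients; that is, there are at most two values of d ≥ 0 for which G^{(d+1)} ≠ 1 and |G^{(d)}/G^{(d+1)}| = p^{2^d+1}. -/
/-- A derived quotient `G^(d)/G^(d+1)` is small if `G^(d+1) ≠ 1` and it has order `p^(2^d+1)`. -/
def IsSmallDerivedQuotient (p : ℕ) (G : Type*) [Group G] (d : ℕ) : Prop :=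
  derivedSeries G (d + 1) ≠ ⊥ ∧
    (derivedSeries G (d + 1)).relIndex (derivedSeries G d) = p ^ (2 ^ d + 1)

/-!
Write `γ k` for the lower central series (with `γ 0 = G`) and `[N, k G]` for the left-normed
commutator `[N, G, …, G]`. By the three subgroups lemma `[N, γ k] ≤ [N, (k+1) G]`, so
`G^(d) ≤ γ k` gives `G^(d+1) ≤ [G^(d), (k+1) G]`; and in a finite `p`-group each step of
`N ≥ [N, G] ≥ [N, 2 G] ≥ …` above `1` has index at least `p`. As `G^(d) ≤ γ (2^d - 1)`, a small
quotient `G^(d)/G^(d+1)` leaves room for only one factor `p` beyond this bound.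

For small `d` this forces `|G^(d) : [G^(d), G]| ≤ p²`, so `G^(d)` is generated by two elements
`u, v` modulo `[G^(d), G]`. Then `G^(d+1)` is cyclic modulo `γ (2^(d+1))`, generated by `[u, v]`,
whence `G^(d+2) ≤ [G^(d+1), γ (2^(d+1))] ≤ γ (2^(d+2))`. Since `[γ i, γ j] ≤ γ (i + j + 1)`, it
follows that `G^(e) ≤ γ (2^e + 1)` for all `e ≥ d + 3`, which rules out small `e`: small indices
are at most `2` apart. If `d`, `d + 1`, `d + 2` were all small, the same argument at `d + 2` and a
case split on whether `|G^(d) : [G^(d), G]|` is at most `p` or at least `p²` push `G^(d+3)`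
deeper into `[G^(d), k G]` than `|G^(d) : G^(d+3)| = p^(7·2^d+3)` permits.
-/

open Subgroup
open scoped commutatorElement

section

variable {G : Type*} [Group G]

local notation "γ" => Subgroup.lowerCentralSeries (⊤ : Subgroup G)

namespace Subgroup

def leftNormedComm (N : Subgroup G) : ℕ → Subgroup G
  | 0 => N
  | n + 1 => ⁅leftNormedComm N n, ⊤⁆

instance leftNormedComm_normal (N : Subgroup G) [N.Normal] (n : ℕ) :
    (leftNormedComm N n).Normal := by
  induction n with
  | zero => assumption
  | succ n ih => exact commutator_normal _ _

theorem leftNormedComm_add (N : Subgroup G) (m n : ℕ) :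
    leftNormedComm (leftNormedComm N m) n = leftNormedComm N (m + n) := by
  induction n with
  | zero => rfl
  | succ n ih => exact congrArg (⁅·, ⊤⁆) ih

theorem leftNormedComm_succ' (N : Subgroup G) (n : ℕ) :
    leftNormedComm N (n + 1) = leftNormedComm ⁅N, ⊤⁆ n := by
  rw [add_comm, ← leftNormedComm_add]
  rfl

theorem leftNormedComm_mono {N M : Subgroup G} (h : N ≤ M) (n : ℕ) :
    leftNormedComm N n ≤ leftNormedComm M n := by
  induction n with
  | zero => exact h
  | succ n ih => exact commutator_mono ih le_rfl

theorem leftNormedComm_le_of_le_leftNormedComm {X N : Subgroup G} {i : ℕ}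
    (h : X ≤ leftNormedComm N i) (j : ℕ) : leftNormedComm X j ≤ leftNormedComm N (i + j) :=
  (leftNormedComm_mono h j).trans_eq (leftNormedComm_add N i j)

theorem leftNormedComm_top (n : ℕ) : leftNormedComm (⊤ : Subgroup G) n = γ n := by
  induction n with
  | zero => rfl
  | succ n ih => exact congrArg (⁅·, ⊤⁆) ih

theorem commutator_commutator_le_of_rotate_s11 {A B C N : Subgroup G} [N.Normal]
    (h₁ : ⁅⁅B, C⁆, A⁆ ≤ N) (h₂ : ⁅⁅C, A⁆, B⁆ ≤ N) : ⁅⁅A, B⁆, C⁆ ≤ N := by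
  rw [← QuotientGroup.ker_mk' N, ← map_eq_bot_iff, map_commutator, map_commutator] at h₁ h₂ ⊢
  exact commutator_commutator_eq_bot_of_rotate h₁ h₂

theorem commutator_leftNormedComm_lowerCentralSeries_le (N : Subgroup G) [N.Normal] (i j : ℕ) :
    ⁅leftNormedComm N i, γ j⁆ ≤ leftNormedComm N (i + j + 1) := by
  induction j generalizing i with
  | zero => exact le_rfl
  | succ j ih =>
    rw [lowerCentralSeries_succ, commutator_comm]
    refine commutator_commutator_le_of_rotate_s11 ?_ ?_
    · rw [commutator_comm ⊤]
      exact (ih (i + 1)).trans_eq (by rw [Nat.add_right_comm i 1 j]; rfl)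
    · exact commutator_mono (ih i) le_rfl

theorem commutator_lowerCentralSeries_le_s11 (i j : ℕ) : ⁅γ i, γ j⁆ ≤ γ (i + j + 1) := by
  simpa only [leftNormedComm_top] using commutator_leftNormedComm_lowerCentralSeries_le ⊤ i j

theorem commutator_lowerCentralSeries_le_leftNormedComm (N : Subgroup G) [N.Normal] (k : ℕ) :
    ⁅N, γ k⁆ ≤ leftNormedComm N (k + 1) :=
  (commutator_leftNormedComm_lowerCentralSeries_le N 0 k).trans_eq (by rw [zero_add])

theorem commutator_le_leftNormedComm_of_le {A : Subgroup G} [A.Normal] {k : ℕ} (hA : A ≤ γ k) :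
    ⁅A, A⁆ ≤ leftNormedComm A (k + 1) :=
  (commutator_mono le_rfl hA).trans (commutator_lowerCentralSeries_le_leftNormedComm A k)

theorem le_centralizer_of_le_closure_pair_sup {Y Z : Subgroup G} {a b : G} (ha : a ∈ Y)
    (hb : b ∈ Y) (hab : Commute a b) (hY : Y ≤ closure {a, b} ⊔ Z) (hZ : Z ≤ centralizer Y) :
    Y ≤ centralizer Y := by
  have hgen : ({a, b} : Set G) ⊆ centralizer (Y : Set G) := by
    intro x hx
    have hxY : x ∈ Y := by rcases hx with rfl | rfl <;> assumption
    suffices Y ≤ centralizer {x} from fun y hy ↦ mem_centralizer_singleton_iff.1 (this hy)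
    refine hY.trans (sup_le ((closure_le _).2 ?_) (hZ.trans (centralizer_le (by simpa))))
    rintro y hy
    rw [SetLike.mem_coe, mem_centralizer_singleton_iff]
    rcases hx with rfl | rfl <;> rcases hy with rfl | rfl
    exacts [rfl, hab.symm.eq, hab.eq, rfl]
  exact hY.trans (sup_le ((closure_le _).2 hgen) hZ)

theorem commutator_le_of_le_closure_pair_sup {X K M : Subgroup G} [M.Normal] {u v : G}
    (hu : u ∈ X) (hv : v ∈ X) (hX : X ≤ closure {u, v} ⊔ K) (huv : ⁅u, v⁆ ∈ M)
    (hXK : ⁅X, K⁆ ≤ M) : ⁅X, X⁆ ≤ M := by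
  rw [← QuotientGroup.ker_mk' M, ← map_eq_bot_iff] at hXK ⊢
  rw [map_commutator, commutator_eq_bot_iff_le_centralizer] at hXK ⊢
  refine le_centralizer_of_le_closure_pair_sup (mem_map_of_mem _ hu) (mem_map_of_mem _ hv) ?_ ?_
    (le_centralizer_iff.1 hXK)
  · rw [← commutatorElement_eq_one_iff_commute, ← map_commutatorElement]
    exact (QuotientGroup.eq_one_iff _).2 huv
  · rw [← Set.image_pair, ← MonoidHom.map_closure, ← map_sup]
    exact map_mono hX

theorem commutator_le_of_le_zpowers_sup {X K M : Subgroup G} [M.Normal] {u : G} (hu : u ∈ X)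
    (hX : X ≤ zpowers u ⊔ K) (hXK : ⁅X, K⁆ ≤ M) : ⁅X, X⁆ ≤ M := by
  refine commutator_le_of_le_closure_pair_sup hu hu ?_ ?_ hXK
  · rwa [Set.pair_eq_singleton, ← zpowers_eq_closure]
  · rw [commutatorElement_self]
    exact one_mem M

theorem normal_zpowers_sup {L : Subgroup G} [L.Normal] {c : G} (hc : ∀ g, ⁅c, g⁆ ∈ L) :
    (zpowers c ⊔ L).Normal := by
  have hcen : zpowers (c : G ⧸ L) ≤ center (G ⧸ L) := by
    refine zpowers_le.2 (mem_center_iff.2 fun g ↦ ?_)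
    induction g using QuotientGroup.induction_on with
    | H g =>
      have h : ⁅(c : G ⧸ L), (g : G ⧸ L)⁆ = 1 := (QuotientGroup.eq_one_iff _).2 (hc g)
      exact (commutatorElement_eq_one_iff_commute.1 h).symm.eq
  have : (zpowers (c : G ⧸ L)).Normal :=
    ⟨fun n hn g ↦ by rwa [mem_center_iff.1 (hcen hn) g, mul_inv_cancel_right]⟩
  have hcomap : zpowers c ⊔ L = comap (QuotientGroup.mk' L) (zpowers (c : G ⧸ L)) := by
    rw [← QuotientGroup.mk'_apply, ← MonoidHom.map_zpowers, comap_map_eq, QuotientGroup.ker_mk']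
  rw [hcomap]
  infer_instance

end Subgroup

theorem derivedSeries_succ_le_of_le {n k : ℕ} (h : derivedSeries G n ≤ γ k) :
    derivedSeries G (n + 1) ≤ γ (2 * k + 1) := by
  rw [derivedSeries_succ, two_mul]
  exact (commutator_mono h h).trans (commutator_lowerCentralSeries_le_s11 k k)

theorem derivedSeries_le_lowerCentralSeries_two_pow_sub_one (n : ℕ) :
    derivedSeries G n ≤ γ (2 ^ n - 1) := by
  induction n with
  | zero => exact le_top
  | succ n ih =>
    refine (derivedSeries_succ_le_of_le ih).trans_eq (congrArg γ ?_)
    have := Nat.one_le_two_pow (n := n)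
    rw [pow_succ]
    omega

theorem derivedSeries_le_lowerCentralSeries_two_pow_add_one {n m : ℕ}
    (h : derivedSeries G n ≤ γ (2 ^ n + 1)) (hnm : n ≤ m) :
    derivedSeries G m ≤ γ (2 ^ m + 1) := by
  induction m, hnm using Nat.le_induction with
  | base => exact h
  | succ m _ ih =>
    refine (derivedSeries_succ_le_of_le ih).trans (Subgroup.lowerCentralSeries_antitone _ ?_)
    rw [pow_succ]
    omega

theorem commutator_derivedSeries_top_le (n : ℕ) : ⁅derivedSeries G n, ⊤⁆ ≤ γ (2 ^ n) :=
  (commutator_mono (derivedSeries_le_lowerCentralSeries_two_pow_sub_one n) le_rfl).trans_eq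
    (congrArg γ (Nat.sub_add_cancel Nat.one_le_two_pow))

theorem derivedSeries_succ_le_leftNormedComm (n : ℕ) :
    derivedSeries G (n + 1) ≤ leftNormedComm (derivedSeries G n) (2 ^ n) :=
  (commutator_le_leftNormedComm_of_le
    (derivedSeries_le_lowerCentralSeries_two_pow_sub_one n)).trans_eq
      (congrArg _ (Nat.sub_add_cancel Nat.one_le_two_pow))

namespace IsPGroup

variable [Finite G] {p : ℕ}

theorem mul_card_le_card_of_lt (hp : p.Prime) (hG : IsPGroup p G) {X Y : Subgroup G}
    (h : X < Y) : p * Nat.card X ≤ Nat.card Y := by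
  have := Fact.mk hp
  obtain ⟨a, ha⟩ := iff_card.1 (hG.to_subgroup X)
  obtain ⟨b, hb⟩ := iff_card.1 (hG.to_subgroup Y)
  have hab : a < b := by
    by_contra! hba
    refine h.ne (eq_of_le_of_card_ge h.le ?_)
    rw [ha, hb]
    exact Nat.pow_le_pow_right hp.pos hba
  rw [ha, hb, ← pow_succ']
  exact Nat.pow_le_pow_right hp.pos hab

theorem card_le_pow_mul_or_pow_succ_mul_le (hp : p.Prime) (hG : IsPGroup p G)
    (X Y : Subgroup G) (n : ℕ) :
    Nat.card Y ≤ p ^ n * Nat.card X ∨ p ^ (n + 1) * Nat.card X ≤ Nat.card Y := by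
  have := Fact.mk hp
  obtain ⟨a, ha⟩ := iff_card.1 (hG.to_subgroup X)
  obtain ⟨b, hb⟩ := iff_card.1 (hG.to_subgroup Y)
  rw [ha, hb, ← pow_add, ← pow_add]
  rcases le_or_gt b (n + a) with h | h
  · exact .inl (Nat.pow_le_pow_right hp.pos h)
  · exact .inr (Nat.pow_le_pow_right hp.pos (by omega))

theorem commutator_top_lt (hp : p.Prime) (hG : IsPGroup p G) {N : Subgroup G} [N.Normal]
    (hN : N ≠ ⊥) : ⁅N, ⊤⁆ < N := by
  have := Fact.mk hp
  refine (commutator_le_left N ⊤).lt_of_ne fun heq ↦ hN ?_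
  have hle : ∀ n, N ≤ γ n := by
    intro n
    induction n with
    | zero => exact le_top
    | succ n ih => exact heq.symm.le.trans (commutator_mono ih le_rfl)
  obtain ⟨n, hn⟩ := Subgroup.nilpotent_iff_lowerCentralSeries.1 hG.isNilpotent
  exact le_bot_iff.1 (hn ▸ hle n)

theorem pow_mul_card_le_card_of_le_leftNormedComm (hp : p.Prime) (hG : IsPGroup p G)
    {N X : Subgroup G} [N.Normal] {t : ℕ} (hX : X ≤ leftNormedComm N t) (hX₀ : X ≠ ⊥) :
    p ^ t * Nat.card X ≤ Nat.card N := by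
  induction t generalizing X with
  | zero => rw [pow_zero, one_mul]; exact card_le_of_le hX
  | succ t ih =>
    have hlt : leftNormedComm N (t + 1) < leftNormedComm N t :=
      hG.commutator_top_lt hp fun h ↦ hX₀ (le_bot_iff.1 (h ▸ hX.trans (commutator_le_left _ _)))
    calc p ^ (t + 1) * Nat.card X
        ≤ p ^ t * (p * Nat.card (leftNormedComm N (t + 1))) := by
          rw [pow_succ, mul_assoc]
          gcongr
          exact card_le_of_le hX
      _ ≤ p ^ t * Nat.card (leftNormedComm N t) := by
          gcongr
          exact hG.mul_card_le_card_of_lt hp hlt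
      _ ≤ Nat.card N := ih le_rfl (ne_bot_of_gt hlt)

theorem exists_le_zpowers_sup (hp : p.Prime) (hG : IsPGroup p G) {H Y : Subgroup G}
    (hHY : H ≤ Y) (hcard : Nat.card Y ≤ p * Nat.card H) : ∃ u ∈ Y, Y ≤ zpowers u ⊔ H := by
  by_cases hYH : Y ≤ H
  · exact ⟨1, one_mem Y, hYH.trans le_sup_right⟩
  obtain ⟨u, huY, huH⟩ := SetLike.not_le_iff_exists.1 hYH
  have hlt : H < zpowers u ⊔ H :=
    lt_of_le_of_ne le_sup_right fun h ↦ huH (h ▸ mem_sup_left (mem_zpowers u))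
  have hle : zpowers u ⊔ H ≤ Y := sup_le (zpowers_le.2 huY) hHY
  exact ⟨u, huY, (eq_of_le_of_card_ge hle (hcard.trans (hG.mul_card_le_card_of_lt hp hlt))).ge⟩

theorem exists_le_closure_pair_sup (hp : p.Prime) (hG : IsPGroup p G) {H Y : Subgroup G}
    (hHY : H ≤ Y) (hcard : Nat.card Y ≤ p ^ 2 * Nat.card H) :
    ∃ u ∈ Y, ∃ v ∈ Y, Y ≤ closure {u, v} ⊔ H := by
  by_cases hYH : Y ≤ H
  · exact ⟨1, one_mem Y, 1, one_mem Y, hYH.trans le_sup_right⟩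
  obtain ⟨v, hvY, hvH⟩ := SetLike.not_le_iff_exists.1 hYH
  have hlt : H < zpowers v ⊔ H :=
    lt_of_le_of_ne le_sup_right fun h ↦ hvH (h ▸ mem_sup_left (mem_zpowers v))
  obtain ⟨u, huY, hu⟩ := hG.exists_le_zpowers_sup hp (sup_le (zpowers_le.2 hvY) hHY) <|
    calc Nat.card Y ≤ p * (p * Nat.card H) := by rwa [← mul_assoc, ← sq]
      _ ≤ p * Nat.card ↥(zpowers v ⊔ H) := by
          gcongr
          exact hG.mul_card_le_card_of_lt hp hlt
  refine ⟨u, huY, v, hvY, hu.trans_eq ?_⟩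
  rw [Set.insert_eq, Subgroup.closure_union, ← zpowers_eq_closure, ← zpowers_eq_closure,
    sup_assoc]

theorem commutator_le_commutator_of_card_le (hp : p.Prime) (hG : IsPGroup p G)
    {A K : Subgroup G} [A.Normal] [K.Normal] (hKA : K ≤ A)
    (hcard : Nat.card A ≤ p * Nat.card K) : ⁅A, A⁆ ≤ ⁅A, K⁆ := by
  obtain ⟨u, huA, hu⟩ := hG.exists_le_zpowers_sup hp hKA hcard
  exact commutator_le_of_le_zpowers_sup huA hu le_rfl

theorem card_le_pow_mul_card_commutator_top (hp : p.Prime) (hG : IsPGroup p G)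
    {A : Subgroup G} [A.Normal] {k s : ℕ} (hA : A ≤ γ k) (hAA : ⁅A, A⁆ ≠ ⊥)
    (hcard : Nat.card A ≤ p ^ (k + 1 + s) * Nat.card ↥⁅A, A⁆) :
    Nat.card A ≤ p ^ (s + 1) * Nat.card ↥⁅A, (⊤ : Subgroup G)⁆ := by
  have hdeep : ⁅A, A⁆ ≤ leftNormedComm ⁅A, ⊤⁆ k :=
    (commutator_le_leftNormedComm_of_le hA).trans_eq (leftNormedComm_succ' A k)
  calc Nat.card A ≤ p ^ (s + 1) * (p ^ k * Nat.card ↥⁅A, A⁆) := hcard.trans_eq (by ring)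
    _ ≤ p ^ (s + 1) * Nat.card ↥⁅A, (⊤ : Subgroup G)⁆ := by
        gcongr
        exact hG.pow_mul_card_le_card_of_le_leftNormedComm hp hdeep hAA

theorem commutator_commutator_le_of_card_le_sq (hp : p.Prime) (hG : IsPGroup p G)
    {A : Subgroup G} [A.Normal] {k : ℕ} (hA : A ≤ γ k)
    (hcard : Nat.card A ≤ p ^ 2 * Nat.card ↥⁅A, (⊤ : Subgroup G)⁆) :
    ⁅⁅A, A⁆, ⁅A, A⁆⁆ ≤ ⁅⁅A, A⁆, γ (2 * k + 2)⁆ := by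
  obtain ⟨u, hu, v, hv, huv⟩ := hG.exists_le_closure_pair_sup hp (commutator_le_left A ⊤) hcard
  have hAA : ⁅A, A⁆ ≤ γ (2 * k + 1) :=
    (commutator_mono hA hA).trans
      ((commutator_lowerCentralSeries_le_s11 k k).trans_eq (by rw [two_mul]))
  have hAA₁ : ⁅A, ⁅A, ⊤⁆⁆ ≤ γ (2 * k + 2) :=
    (commutator_mono hA (commutator_mono hA le_rfl)).trans
      ((commutator_lowerCentralSeries_le_s11 k (k + 1)).trans_eq (by congr 1; ring))
  have hc : ⁅u, v⁆ ∈ ⁅A, A⁆ := commutator_mem_commutator hu hv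
  have : (zpowers ⁅u, v⁆ ⊔ γ (2 * k + 2)).Normal :=
    normal_zpowers_sup fun g ↦ commutator_mem_commutator (hAA hc) (mem_top g)
  have hB : ⁅A, A⁆ ≤ zpowers ⁅u, v⁆ ⊔ γ (2 * k + 2) :=
    commutator_le_of_le_closure_pair_sup hu hv huv (mem_sup_left (mem_zpowers _))
      (hAA₁.trans le_sup_right)
  exact commutator_le_of_le_zpowers_sup hc hB le_rfl

end IsPGroup

namespace IsSmallDerivedQuotient

variable {p d : ℕ}

theorem card_eq (h : IsSmallDerivedQuotient p G d) :
    Nat.card (derivedSeries G d) = p ^ (2 ^ d + 1) * Nat.card (derivedSeries G (d + 1)) := by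
  rw [← relIndex_bot_left, ← relIndex_bot_left,
    ← relIndex_mul_relIndex _ _ _ bot_le (derivedSeries_antitone G d.le_succ), h.2, mul_comm]

variable [Finite G]

theorem not_le_lowerCentralSeries (hp : p.Prime) (hG : IsPGroup p G)
    (h : IsSmallDerivedQuotient p G d) : ¬ derivedSeries G d ≤ γ (2 ^ d + 1) := by
  intro hle
  have := hG.pow_mul_card_le_card_of_le_leftNormedComm hp
    (commutator_le_leftNormedComm_of_le hle) h.1
  rw [h.card_eq] at this
  have := (Nat.pow_le_pow_iff_right hp.one_lt).1 (Nat.le_of_mul_le_mul_right this Nat.card_pos)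
  omega

theorem card_le_sq_mul_card_commutator_top (hp : p.Prime) (hG : IsPGroup p G)
    (h : IsSmallDerivedQuotient p G d) :
    Nat.card (derivedSeries G d) ≤ p ^ 2 * Nat.card ↥⁅derivedSeries G d, (⊤ : Subgroup G)⁆ := by
  refine hG.card_le_pow_mul_card_commutator_top hp
    (derivedSeries_le_lowerCentralSeries_two_pow_sub_one d) h.1 (h.card_eq.trans_le ?_)
  have := Nat.one_le_two_pow (n := d)
  exact le_of_eq (by congr 2; omega)

theorem derivedSeries_add_two_le_commutator (hp : p.Prime) (hG : IsPGroup p G)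
    (h : IsSmallDerivedQuotient p G d) :
    derivedSeries G (d + 2) ≤ ⁅derivedSeries G (d + 1), γ (2 ^ (d + 1))⁆ := by
  have := hG.commutator_commutator_le_of_card_le_sq hp
    (derivedSeries_le_lowerCentralSeries_two_pow_sub_one d)
    (h.card_le_sq_mul_card_commutator_top hp hG)
  have hd := Nat.one_le_two_pow (n := d)
  rwa [show 2 * (2 ^ d - 1) + 2 = 2 ^ (d + 1) by rw [pow_succ]; omega] at this

theorem derivedSeries_add_two_le (hp : p.Prime) (hG : IsPGroup p G)
    (h : IsSmallDerivedQuotient p G d) : derivedSeries G (d + 2) ≤ γ (2 ^ (d + 2)) := by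
  refine (h.derivedSeries_add_two_le_commutator hp hG).trans ((commutator_mono
    (derivedSeries_le_lowerCentralSeries_two_pow_sub_one (d + 1)) le_rfl).trans
    ((commutator_lowerCentralSeries_le_s11 _ _).trans_eq (congrArg γ ?_)))
  have := Nat.one_le_two_pow (n := d + 1)
  rw [pow_succ 2 (d + 1)]
  omega

theorem le_add_two (hp : p.Prime) (hG : IsPGroup p G) {e : ℕ}
    (hd : IsSmallDerivedQuotient p G d) (he : IsSmallDerivedQuotient p G e) : e ≤ d + 2 := by
  by_contra! hed
  have h₃ : derivedSeries G (d + 3) ≤ γ (2 ^ (d + 3) + 1) :=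
    (derivedSeries_succ_le_of_le (hd.derivedSeries_add_two_le hp hG)).trans_eq
      (by rw [pow_succ 2 (d + 2), mul_comm])
  exact he.not_le_lowerCentralSeries hp hG
    (derivedSeries_le_lowerCentralSeries_two_pow_add_one h₃ hed)

theorem derivedSeries_add_three_le_commutator (hp : p.Prime) (hG : IsPGroup p G)
    (h₀ : IsSmallDerivedQuotient p G d) (h₂ : IsSmallDerivedQuotient p G (d + 2)) :
    derivedSeries G (d + 3) ≤ ⁅derivedSeries G (d + 2), γ (2 ^ (d + 2) + 1)⁆ := by
  have hC := h₀.derivedSeries_add_two_le hp hG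
  have hcard := hG.card_le_pow_mul_card_commutator_top hp (s := 0) hC h₂.1 h₂.card_eq.le
  rw [zero_add, pow_one] at hcard
  exact (hG.commutator_le_commutator_of_card_le hp (commutator_le_left _ ⊤) hcard).trans
    (commutator_mono le_rfl (commutator_mono hC le_rfl))

theorem derivedSeries_add_three_le_leftNormedComm (hp : p.Prime) (hG : IsPGroup p G)
    (h₀ : IsSmallDerivedQuotient p G d) (h₂ : IsSmallDerivedQuotient p G (d + 2)) {δ : ℕ}
    (hB : derivedSeries G (d + 1) ≤ leftNormedComm (derivedSeries G d) δ) :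
    derivedSeries G (d + 3) ≤
      leftNormedComm (derivedSeries G d) (δ + (2 ^ (d + 1) + 1) + (2 ^ (d + 2) + 2)) := by
  have hC : derivedSeries G (d + 2) ≤
      leftNormedComm (derivedSeries G d) (δ + (2 ^ (d + 1) + 1)) :=
    (h₀.derivedSeries_add_two_le_commutator hp hG).trans
      ((commutator_lowerCentralSeries_le_leftNormedComm _ _).trans
        (leftNormedComm_le_of_le_leftNormedComm hB _))
  exact ((h₀.derivedSeries_add_three_le_commutator hp hG h₂).trans
    (commutator_lowerCentralSeries_le_leftNormedComm _ _)).trans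
      (leftNormedComm_le_of_le_leftNormedComm hC _)

theorem pow_mul_card_derivedSeries_add_three_le (hp : p.Prime) (hG : IsPGroup p G)
    (h₀ : IsSmallDerivedQuotient p G d) (h₂ : IsSmallDerivedQuotient p G (d + 2)) :
    p ^ ((2 ^ d + 1) + (2 ^ (d + 1) + 1) + (2 ^ (d + 2) + 1) + 1) *
      Nat.card (derivedSeries G (d + 3)) ≤ Nat.card (derivedSeries G d) := by
  have := Nat.one_le_two_pow (n := d)
  rcases hG.card_le_pow_mul_or_pow_succ_mul_le hp ⁅derivedSeries G d, ⊤⁆ _ 1 with hA | hA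
  · have hB : derivedSeries G (d + 1) ≤ leftNormedComm (derivedSeries G d) (2 ^ d + 1) :=
      (hG.commutator_le_commutator_of_card_le hp (commutator_le_left _ ⊤) (by simpa using hA)).trans
        ((commutator_mono le_rfl (commutator_derivedSeries_top_le d)).trans
          (commutator_lowerCentralSeries_le_leftNormedComm _ _))
    exact hG.pow_mul_card_le_card_of_le_leftNormedComm hp
      (h₀.derivedSeries_add_three_le_leftNormedComm hp hG h₂ hB) h₂.1
  · set s := (2 ^ d - 1) + (2 ^ (d + 1) + 1) + (2 ^ (d + 2) + 2)
    have hD : derivedSeries G (d + 3) ≤ leftNormedComm ⁅derivedSeries G d, ⊤⁆ s := by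
      rw [← leftNormedComm_succ']
      refine (h₀.derivedSeries_add_three_le_leftNormedComm hp hG h₂
        (derivedSeries_succ_le_leftNormedComm d)).trans_eq (congrArg _ ?_)
      omega
    calc _ = p ^ 2 * (p ^ s * Nat.card (derivedSeries G (d + 3))) := by
          rw [← mul_assoc, ← pow_add]
          congr 2
          omega
      _ ≤ p ^ 2 * Nat.card ↥⁅derivedSeries G d, (⊤ : Subgroup G)⁆ := by
          gcongr
          exact hG.pow_mul_card_le_card_of_le_leftNormedComm hp hD h₂.1
      _ ≤ _ := hA

theorem not_add_two_of_add_one (hp : p.Prime) (hG : IsPGroup p G)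
    (h₀ : IsSmallDerivedQuotient p G d) (h₁ : IsSmallDerivedQuotient p G (d + 1)) :
    ¬ IsSmallDerivedQuotient p G (d + 2) := by
  intro h₂
  have h := h₀.pow_mul_card_derivedSeries_add_three_le hp hG h₂
  rw [h₀.card_eq, h₁.card_eq, h₂.card_eq, ← mul_assoc, ← mul_assoc, ← pow_add, ← pow_add] at h
  have := (Nat.pow_le_pow_iff_right hp.one_lt).1 (Nat.le_of_mul_le_mul_right h Nat.card_pos)
  omega

end IsSmallDerivedQuotient

end

/-- Mann: a finite `p`-group has at most two small derived quotients. -/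
theorem at_most_two_small_derived_quotients {p : ℕ} (hp : p.Prime) {G : Type*}
    [Group G] [Finite G] (hG : IsPGroup p G) :
    ∀ d₁ d₂ d₃ : ℕ, IsSmallDerivedQuotient p G d₁ → IsSmallDerivedQuotient p G d₂ →
      IsSmallDerivedQuotient p G d₃ → d₁ = d₂ ∨ d₁ = d₃ ∨ d₂ = d₃ := by
  intro d₁ d₂ d₃ h₁ h₂ h₃
  by_contra! hne
  have hsmall : ∀ j, j = d₁ ∨ j = d₂ ∨ j = d₃ → IsSmallDerivedQuotient p G j := by
    rintro j (rfl | rfl | rfl) <;> assumption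
  set m := min d₁ (min d₂ d₃)
  have hm := hsmall m (by omega)
  have := hm.le_add_two hp hG h₁
  have := hm.le_add_two hp hG h₂
  have := hm.le_add_two hp hG h₃
  -- three distinct indices in `[m, m + 2]` are exactly `m`, `m + 1`, `m + 2`
  exact hm.not_add_two_of_add_one hp hG (hsmall (m + 1) (by omega)) (hsmall (m + 2) (by omega))
end
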